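/- Let R, S ∈ 𝕽 with h_R = h_S = n ≥ 1. (i) If #𝓗(G,R) ≤ #𝓗(G,S) for every G ∈ 𝔗_a, then #𝓢(G,R) ≤ #𝓢(G,S) for every G ∈ 𝔗_a^{=n} with 𝓢(G,S) ≠ ∅. (ii) If #𝓗(G,R) ≤ #𝓗(G,S) for every finite poset G, then #𝓢(G,R) ≤ #𝓢(G,S) for every poset G ∈ 𝔗_a^{=n}. -/

import Mathlib

/-- A finite digraph: a finite nonempty vertex set `V ⊆ ℕ` together with an
arc set `A ⊆ V × V`. -/
structure Dgraph where
  V : Finset ℕ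
  nonempty : V.Nonempty
  A : Finset (ℕ × ℕ)
  A_sub : ∀ p ∈ A, p.1 ∈ V ∧ p.2 ∈ V

namespace Dgraph

/-- The set of proper arcs of `G`, i.e. the arc set of `G*`. -/
def Astar (G : Dgraph) : Finset (ℕ × ℕ) := G.A.filter (fun p => p.1 ≠ p.2)

/-- `G` is reflexive. -/
def IsRefl (G : Dgraph) : Prop := ∀ v ∈ G.V, (v, v) ∈ G.A

/-- `p` is a path in `G` (a nonempty list of pairwise distinct vertices,
consecutive ones joined by arcs).  Its length as a path is `p.length - 1`. -/
def IsPath (G : Dgraph) (p : List ℕ) : Prop :=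
  p ≠ [] ∧ p.Nodup ∧ (∀ v ∈ p, v ∈ G.V) ∧ p.Chain' (fun v w => (v, w) ∈ G.A)

/-- `p` is a path in `G*`. -/
def IsPathStar (G : Dgraph) (p : List ℕ) : Prop :=
  p ≠ [] ∧ p.Nodup ∧ (∀ v ∈ p, v ∈ G.V) ∧ p.Chain' (fun v w => (v, w) ∈ G.A ∧ v ≠ w)

/-- `G*` contains a closed walk. -/
def HasClosedWalkStar (G : Dgraph) : Prop :=
  ∃ p : List ℕ, (∀ v ∈ p, v ∈ G.V) ∧ p.Chain' (fun v w => (v, w) ∈ G.A ∧ v ≠ w) ∧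
    2 ≤ p.length ∧ p.head? = p.getLast?

/-- membership in the class `𝔗ₐ`: `G*` is acyclic. -/
def MemTa (G : Dgraph) : Prop := ¬ G.HasClosedWalkStar

/-- The height of `G`: the maximal length of a path in `G`. -/
noncomputable def height (G : Dgraph) : ℕ :=
  sSup {n | ∃ p, G.IsPath p ∧ p.length = n + 1}

/-- The interval `[v,w]_G`. -/
def interval (G : Dgraph) (v w : ℕ) : Finset ℕ :=
  G.V.filter (fun z => (v, z) ∈ G.A ∧ (z, w) ∈ G.A)

/-- `ι(v,w)_G`, the cardinality of the interval `[v,w]_G`. -/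
def iota (G : Dgraph) (v w : ℕ) : ℕ := (G.interval v w).card

/-- The set `𝓗(G,H)` of homomorphisms from `G` to `H` (represented as total
maps `ℕ → ℕ`, normalized to `0` outside of `V(G)`). -/
def Hom (G H : Dgraph) : Set (ℕ → ℕ) :=
  {f | (∀ v ∈ G.V, f v ∈ H.V) ∧ (∀ p ∈ G.A, (f p.1, f p.2) ∈ H.A) ∧
    ∀ v, v ∉ G.V → f v = 0}

/-- The set `𝓢(G,H)` of strict homomorphisms from `G` to `H`. -/
def SHom (G H : Dgraph) : Set (ℕ → ℕ) :=
  {f ∈ Hom G H | ∀ p ∈ G.Astar, f p.1 ≠ f p.2}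

/-- `μ_ξ(G)`, for a homomorphism `ξ` from `G` into `H`. -/
def mu (G H : Dgraph) (f : ℕ → ℕ) : ℕ :=
  ∑ p ∈ G.Astar, H.iota (f p.1) (f p.2)

/-- `L` is a subgraph of `G`. -/
def Subgraph (L G : Dgraph) : Prop := L.V ⊆ G.V ∧ L.A ⊆ G.A

/-- Restriction of a map to a vertex set (normalized to `0` outside). -/
def restrict (X : Finset ℕ) (f : ℕ → ℕ) : ℕ → ℕ := fun x => if x ∈ X then f x else 0

/-- `𝓜(L,H)`: homomorphisms from `L` to `H` with maximal `μ`. -/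
def MSet (L H : Dgraph) : Set (ℕ → ℕ) :=
  {f ∈ Hom L H | ∀ g ∈ Hom L H, mu L H g ≤ mu L H f}

/-- `𝓜^𝓛(G,H)`. -/
def MLSet (G H : Dgraph) (𝓛 : Set Dgraph) : Set (ℕ → ℕ) :=
  {f ∈ Hom G H | ∀ L ∈ 𝓛, restrict L.V f ∈ MSet L H}

/-- `𝓙^𝓛_{G,H'}(ξ)` for `ξ ∈ 𝓗(G,H)`. -/
def JSet (G H H' : Dgraph) (𝓛 : Set Dgraph) (ξ : ℕ → ℕ) : Set (ℕ → ℕ) :=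
  {ζ ∈ Hom G H' | ∀ L ∈ 𝓛, ∀ p ∈ L.Astar,
    H'.iota (ζ p.1) (ζ p.2) = H.iota (ξ p.1) (ξ p.2)}

/-- The digraph `P_×` of a path `P = P_0, …, P_ℓ`: vertex set `{P_0,…,P_ℓ}`
and arcs `P_{i-1}P_i`. -/
def pathGraph (P : List ℕ) (h : P ≠ []) : Dgraph where
  V := P.toFinset
  nonempty := by
    obtain ⟨a, t, rfl⟩ := List.exists_cons_of_ne_nil h
    exact ⟨a, by simp⟩
  A := (P.zip P.tail).toFinset
  A_sub := by
    intro p hp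
    rw [List.mem_toFinset] at hp
    have h1 := List.of_mem_zip hp
    exact ⟨List.mem_toFinset.mpr h1.1, List.mem_toFinset.mpr (List.mem_of_mem_tail h1.2)⟩

/-- `𝓛(G)`: the set of the digraphs `P_×` for the paths `P` of length `h_G` in `G`. -/
def LSet (G : Dgraph) : Set Dgraph :=
  {D | ∃ (P : List ℕ) (h : P ≠ []), G.IsPath P ∧ P.length = G.height + 1 ∧
    D = pathGraph P h}

/-- The class `𝕽`: reflexive digraphs `R ∈ 𝔗ₐ` with
`𝓜^{𝓛(R)}(R,R) ∩ 𝓢(R,R) ≠ ∅`. -/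
def MemR (R : Dgraph) : Prop :=
  R.MemTa ∧ R.IsRefl ∧ (MLSet R R (LSet R) ∩ SHom R R).Nonempty

/-- `G` is a poset: reflexive, antisymmetric and transitive. -/
def IsPoset (G : Dgraph) : Prop :=
  G.IsRefl ∧ (∀ v w, (v, w) ∈ G.A → (w, v) ∈ G.A → v = w) ∧
    (∀ u v w, (u, v) ∈ G.A → (v, w) ∈ G.A → (u, w) ∈ G.A)

/-- The class `𝔗ₐ^{=n}`: digraphs in `𝔗ₐ` of height `n` in which every vertex
lies on a path of length `n`. -/
def MemTaEq (n : ℕ) (G : Dgraph) : Prop :=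
  G.MemTa ∧ G.height = n ∧ ∀ v ∈ G.V, ∃ p, G.IsPath p ∧ p.length = n + 1 ∧ v ∈ p

/-- A maximal path in `G`: no path in `G` properly contains its vertex set. -/
def MaximalPath (G : Dgraph) (P : List ℕ) : Prop :=
  G.IsPath P ∧ ∀ Q, G.IsPath Q → (∀ v ∈ P, v ∈ Q) → ∀ v ∈ Q, v ∈ P

end Dgraph

open Dgraph

/-!
For `G ∈ 𝔗ₐ^{=n}` and `k ∈ ℕ` let `Γₖ` be `G` together with, for each arc `uv` and each longest
path through it, `k` new vertices `e` with arcs `u → e → v` (for posets: the reflexive-transitive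
closure of this digraph). A homomorphism `Γₖ → H` restricts to some `ξ ∈ 𝓗(G,H)` and sends each
new vertex into `[ξ u, ξ v]`, so the fibre over `ξ` has at most `M(ξ)^k` elements, and exactly
that many when `ξ` is strict, where `M(ξ)` is the product, over the longest paths `P` of `G`, of
the interval sizes `ι` along `ξ(P)`.

For `H ∈ 𝕽` of height `n`, a map `σ ∈ 𝓜^{𝓛(H)}(H,H) ∩ 𝓢(H,H)` bounds the sum of the interval
sizes along any walk of length `n` in `H` by `2n`, so `M(ξ) ≤ W := 2^(n · #paths)`. Equality
holds iff `ξ` is strict: a strict `ξ` maps longest paths to longest paths, whose arcs span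
intervals of size `2`; a non-strict `ξ` collapses an arc of some longest path (every vertex lies
on one), contributing a factor `1`. Hence, for all `k`,
`#𝓢(G,R) W^k ≤ #𝓗(Γₖ,R) ≤ #𝓗(Γₖ,S) ≤ #𝓢(G,S) W^k + #𝓗(G,S) (W-1)^k`, and `k → ∞` gives
`#𝓢(G,R) ≤ #𝓢(G,S)`.
-/

open Finset Relation

lemma List.mem_zip_tail_iff {α : Type*} {l : List α} {a : α × α} :
    a ∈ l.zip l.tail ↔ ∃ l₁ l₂, l = l₁ ++ a.1 :: a.2 :: l₂ := by
  induction l with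
  | nil => simp
  | cons x t ih =>
    rcases t with _ | ⟨y, t⟩
    · simp only [List.tail_cons, List.zip_nil_right, List.not_mem_nil, false_iff]
      rintro ⟨_ | ⟨_, _ | _⟩, _, h⟩ <;> simp at h
    · simp only [List.tail_cons, List.zip_cons_cons, List.mem_cons] at ih ⊢
      rw [ih]
      constructor
      · rintro (rfl | ⟨l₁, l₂, h⟩)
        · exact ⟨[], t, rfl⟩
        · exact ⟨x :: l₁, l₂, by rw [h]; rfl⟩
      · rintro ⟨_ | ⟨z, l₁⟩, l₂, h⟩
        · simp only [List.nil_append, List.cons.injEq] at h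
          obtain ⟨rfl, rfl, -⟩ := h
          exact Or.inl rfl
        · simp only [List.cons_append, List.cons.injEq] at h
          exact Or.inr ⟨l₁, l₂, h.2⟩

lemma List.Nodup.ne_of_split {α : Type*} {l₁ l₂ : List α} {v w : α}
    (h : (l₁ ++ v :: w :: l₂).Nodup) : v ≠ w := by
  rintro rfl
  simp [List.nodup_append] at h

lemma List.Nodup.zip_left {α β : Type*} {l : List α} (h : l.Nodup) (l' : List β) :
    (l.zip l').Nodup := by
  induction l generalizing l' with
  | nil => simp
  | cons a l ih =>
    rcases l' with _ | ⟨b, l'⟩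
    · simp
    · rw [List.nodup_cons] at h
      exact List.nodup_cons.2 ⟨fun hm => h.1 (List.of_mem_zip hm).1, ih h.2 l'⟩

lemma List.exists_map_eq_of_nodup {α β : Type*} [DecidableEq α] {q : List α} {w : List β}
    (hq : q.Nodup) (h : q.length = w.length) (d : β) :
    ∃ ζ : α → β, q.map ζ = w ∧ ∀ x ∉ q, ζ x = d := by
  induction q generalizing w with
  | nil => exact ⟨fun _ => d, by simpa [eq_comm] using h, fun _ _ => rfl⟩
  | cons a q ih =>
    obtain _ | ⟨b, w⟩ := w
    · simp at h
    rw [List.nodup_cons] at hq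
    obtain ⟨ζ, hζ, hζ0⟩ := ih hq.2 (by simpa using h)
    refine ⟨Function.update ζ a b, ?_, fun x hx => ?_⟩
    · rw [List.map_cons, Function.update_self, ← hζ]
      exact congrArg _ (List.map_congr_left fun x hx =>
        Function.update_of_ne (ne_of_mem_of_not_mem hx hq.1) _ _)
    · rw [List.mem_cons, not_or] at hx
      rw [Function.update_of_ne hx.1, hζ0 x hx.2]

lemma Nat.two_mul_lt_two_pow {x : ℕ} (hx : 3 ≤ x) : 2 * x < 2 ^ x := by
  induction x, hx using Nat.le_induction with
  | base => norm_num
  | succ x hx ih =>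
    have : 2 ≤ 2 ^ x := le_self_pow₀ one_le_two (by omega)
    rw [pow_succ]
    omega

lemma Nat.two_mul_le_two_pow {x : ℕ} (hx : 1 ≤ x) : 2 * x ≤ 2 ^ x := by
  rcases (show x = 1 ∨ x = 2 ∨ 3 ≤ x by omega) with rfl | rfl | hx3
  · norm_num
  · norm_num
  · exact (Nat.two_mul_lt_two_pow hx3).le

lemma List.prod_mul_two_pow_length_le {l : List ℕ} (h1 : ∀ x ∈ l, 1 ≤ x) :
    l.prod * 2 ^ l.length ≤ 2 ^ l.sum := by
  induction l with
  | nil => simp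
  | cons x t ih =>
    simp only [List.mem_cons, forall_eq_or_imp] at h1
    calc (x :: t).prod * 2 ^ (x :: t).length = (2 * x) * (t.prod * 2 ^ t.length) := by
          simp only [List.prod_cons, List.length_cons, pow_succ]; ring
      _ ≤ 2 ^ x * 2 ^ t.sum := Nat.mul_le_mul (Nat.two_mul_le_two_pow h1.1) (ih h1.2)
      _ = 2 ^ (x :: t).sum := by rw [List.sum_cons, pow_add]

lemma List.prod_mul_two_pow_length_lt {l : List ℕ} (h1 : ∀ x ∈ l, 1 ≤ x)
    (h3 : ∃ x ∈ l, 3 ≤ x) : l.prod * 2 ^ l.length < 2 ^ l.sum := by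
  induction l with
  | nil => simp at h3
  | cons x t ih =>
    simp only [List.mem_cons, forall_eq_or_imp, exists_eq_or_imp] at h1 h3
    calc (x :: t).prod * 2 ^ (x :: t).length = (2 * x) * (t.prod * 2 ^ t.length) := by
          simp only [List.prod_cons, List.length_cons, pow_succ]; ring
      _ < 2 ^ x * 2 ^ t.sum := by
          rcases h3 with hx | ht
          · exact Nat.mul_lt_mul_of_lt_of_le (Nat.two_mul_lt_two_pow hx)
              (List.prod_mul_two_pow_length_le h1.2) (Nat.two_pow_pos _)
          · exact Nat.mul_lt_mul_of_le_of_lt (Nat.two_mul_le_two_pow h1.1) (ih h1.2 ht)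
              (Nat.two_pow_pos _)
      _ = 2 ^ (x :: t).sum := by rw [List.sum_cons, pow_add]

lemma List.prod_le_two_pow_length {l : List ℕ} (h1 : ∀ x ∈ l, 1 ≤ x)
    (hs : l.sum ≤ 2 * l.length) : l.prod ≤ 2 ^ l.length := by
  refine Nat.le_of_mul_le_mul_right ?_ (Nat.two_pow_pos l.length)
  calc l.prod * 2 ^ l.length ≤ 2 ^ l.sum := List.prod_mul_two_pow_length_le h1
    _ ≤ 2 ^ l.length * 2 ^ l.length := by
      rw [← pow_add]; exact Nat.pow_le_pow_right two_pos (by omega)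

/-- Strictness: an entry `1` either forces another entry `≥ 3` or leaves the sum `< 2 * length`. -/

lemma List.prod_lt_two_pow_length {l : List ℕ} (h1 : ∀ x ∈ l, 1 ≤ x)
    (hs : l.sum ≤ 2 * l.length) (hone : 1 ∈ l) : l.prod < 2 ^ l.length := by
  refine Nat.lt_of_mul_lt_mul_right (a := 2 ^ l.length) ?_
  by_cases h3 : ∃ x ∈ l, 3 ≤ x
  · calc l.prod * 2 ^ l.length < 2 ^ l.sum := List.prod_mul_two_pow_length_lt h1 h3
      _ ≤ 2 ^ l.length * 2 ^ l.length := by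
        rw [← pow_add]; exact Nat.pow_le_pow_right two_pos (by omega)
  · have h2 : ∀ x ∈ l, x ≤ 2 := fun x hx => by by_contra h; exact h3 ⟨x, hx, by omega⟩
    have hs' : l.sum < 2 * l.length := by
      obtain ⟨s, t, rfl⟩ := List.append_of_mem hone
      have hs2 := List.sum_le_card_nsmul s 2 fun x hx => h2 x (by simp [hx])
      have ht2 := List.sum_le_card_nsmul t 2 fun x hx => h2 x (by simp [hx])
      simp only [List.sum_append, List.sum_cons, List.length_append, List.length_cons,
        smul_eq_mul] at hs2 ht2 ⊢
      omega
    calc l.prod * 2 ^ l.length ≤ 2 ^ l.sum := List.prod_mul_two_pow_length_le h1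
      _ < 2 ^ l.length * 2 ^ l.length := by
        rw [← pow_add]; exact Nat.pow_lt_pow_right one_lt_two (by omega)

/-- `((W-1)/W)^k → 0`, so `C (W-1)^k < W^k` for large `k`. -/
lemma Nat.le_of_forall_mul_pow_le {A B C W : ℕ} (hW : 1 ≤ W)
    (h : ∀ k, A * W ^ k ≤ B * W ^ k + C * (W - 1) ^ k) : A ≤ B := by
  by_contra! hBA
  have hq : ((W - 1 : ℕ) : ℝ) / W < 1 :=
    (div_lt_one (by positivity)).2 (by exact_mod_cast Nat.sub_lt hW one_pos)
  obtain ⟨k, hk⟩ := exists_pow_lt_of_lt_one (show (0 : ℝ) < 1 / (C + 1) by positivity) hq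
  rw [div_pow, div_lt_div_iff₀ (by positivity) (by positivity)] at hk
  have hle : W ^ k ≤ C * (W - 1) ^ k := by
    have : (B + 1) * W ^ k ≤ A * W ^ k := Nat.mul_le_mul_right _ hBA
    rw [add_mul, one_mul] at this
    linarith [h k]
  have hle' : (W : ℝ) ^ k ≤ C * ((W - 1 : ℕ) : ℝ) ^ k := by exact_mod_cast hle
  nlinarith [pow_nonneg (Nat.cast_nonneg (α := ℝ) (W - 1)) k]

namespace Dgraph

def StarAdj (G : Dgraph) (v w : ℕ) : Prop := (v, w) ∈ G.A ∧ v ≠ w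

variable {G H Γ : Dgraph} {n k : ℕ} {ξ : ℕ → ℕ} {p : List ℕ}

lemma StarAdj.mem_V {v w : ℕ} (h : G.StarAdj v w) : v ∈ G.V ∧ w ∈ G.V := G.A_sub _ h.1

lemma memTa_iff_irrefl : G.MemTa ↔ ∀ v, ¬ TransGen G.StarAdj v v := by
  constructor
  · intro hG v hvv
    obtain ⟨w, hvw, hwv⟩ := TransGen.head'_iff.1 hvv
    obtain ⟨l, hl, hlast⟩ := List.exists_isChain_cons_of_relationReflTransGen hwv
    refine hG ⟨v :: w :: l, ?_, hl.cons_cons hvw, by simp, ?_⟩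
    · have hw : w ∈ G.V := hvw.mem_V.2
      rintro x (_ | ⟨_, hx⟩)
      · exact hvw.mem_V.1
      · exact hl.induction (· ∈ G.V) _ (fun _ _ h _ => h.mem_V.2) (fun _ => hw) x hx
    · simp [List.getLast?_eq_some_getLast, hlast]
  · rintro h ⟨_ | ⟨a, _ | ⟨b, l⟩⟩, -, hc, hlen, hh⟩
    · simp at hlen
    · simp at hlen
    obtain ⟨hab, hbl⟩ := List.isChain_cons_cons.1 hc
    have hlast : (b :: l).getLast (List.cons_ne_nil _ _) = a := by
      simpa [List.getLast?_eq_some_getLast] using hh.symm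
    have := List.relationReflTransGen_of_exists_isChain _ hbl (List.cons_ne_nil _ _)
    rw [hlast] at this
    exact h a (TransGen.head' hab this)

lemma memTa_of_strictMono (ρ : ℕ → ℕ) (hρ : ∀ v w, G.StarAdj v w → ρ v < ρ w) :
    G.MemTa :=
  memTa_iff_irrefl.2 fun _ hv =>
    lt_irrefl _ (transGen_eq_self (r := ((· < ·) : ℕ → ℕ → Prop)) ▸ hv.lift ρ hρ)

open scoped Classical in
noncomputable def rank (G : Dgraph) (v : ℕ) : ℕ := #{w ∈ G.V | TransGen G.StarAdj w v}

lemma MemTa.rank_lt (hG : G.MemTa) {v w : ℕ} (h : G.StarAdj v w) : G.rank v < G.rank w := by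
  classical
  refine Finset.card_lt_card (Finset.ssubset_iff_of_subset ?_ |>.2 ⟨v, ?_, ?_⟩)
  · intro u hu
    simp only [Finset.mem_filter] at hu ⊢
    exact ⟨hu.1, hu.2.tail h⟩
  · simpa using ⟨h.mem_V.1, TransGen.single h⟩
  · simpa using fun _ => memTa_iff_irrefl.1 hG v

lemma MemTa.nodup (hG : G.MemTa) {l : List ℕ} (hl : l.IsChain G.StarAdj) : l.Nodup := by
  have : (l.map G.rank).Pairwise (· < ·) :=
    ((List.isChain_map _).2 (hl.imp fun _ _ h => hG.rank_lt h)).pairwise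
  exact List.Nodup.of_map _ (this.imp ne_of_lt)

lemma MemTa.isPath (hG : G.MemTa) {l : List ℕ} (hne : l ≠ []) (hV : ∀ v ∈ l, v ∈ G.V)
    (hl : l.IsChain G.StarAdj) : G.IsPath l :=
  ⟨hne, hG.nodup hl, hV, hl.imp fun _ _ h => h.1⟩

lemma IsPath.isChain_starAdj (hp : G.IsPath p) : p.IsChain G.StarAdj :=
  List.isChain_iff_forall_rel_of_append_cons_cons.2 fun _ _ _ _ h =>
    ⟨List.isChain_iff_forall_rel_of_append_cons_cons.1 hp.2.2.2 h, (h ▸ hp.2.1).ne_of_split⟩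

lemma bddAbove_pathLengths (G : Dgraph) :
    BddAbove {n | ∃ p, G.IsPath p ∧ p.length = n + 1} := by
  refine ⟨G.V.card, ?_⟩
  rintro m ⟨p, hp, hlen⟩
  have := Finset.card_le_card (s := p.toFinset) fun v hv => hp.2.2.1 v (List.mem_toFinset.1 hv)
  rw [List.toFinset_card_of_nodup hp.2.1] at this
  omega

lemma IsPath.length_le_height (hp : G.IsPath p) : p.length ≤ G.height + 1 := by
  have := le_csSup (bddAbove_pathLengths G) (a := p.length - 1) ⟨p, hp, by
    have := List.length_pos_iff.2 hp.1; omega⟩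
  rw [height]; omega

lemma exists_isPath_length_eq_height (G : Dgraph) :
    ∃ p, G.IsPath p ∧ p.length = G.height + 1 := by
  obtain ⟨v, hv⟩ := G.nonempty
  exact Nat.sSup_mem (s := {n | ∃ p, G.IsPath p ∧ p.length = n + 1})
    ⟨0, [v], ⟨by simp, by simp, by simpa, List.isChain_singleton v⟩, rfl⟩ (bddAbove_pathLengths G)

lemma MemTa.length_le_height (hG : G.MemTa) {l : List ℕ} (hV : ∀ v ∈ l, v ∈ G.V)
    (hl : l.IsChain G.StarAdj) : l.length ≤ G.height + 1 := by
  rcases eq_or_ne l [] with rfl | hne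
  · simp
  · exact (hG.isPath hne hV hl).length_le_height

def iotaList (H : Dgraph) (l : List ℕ) : List ℕ := (l.zip l.tail).map fun a => H.iota a.1 a.2

lemma mem_interval {v w z : ℕ} :
    z ∈ H.interval v w ↔ z ∈ H.V ∧ (v, z) ∈ H.A ∧ (z, w) ∈ H.A := by
  simp [interval]

lemma one_le_iota (hrefl : H.IsRefl) {v w : ℕ} (h : (v, w) ∈ H.A) : 1 ≤ H.iota v w :=
  Finset.card_pos.2 ⟨w, mem_interval.2 ⟨(H.A_sub _ h).2, h, hrefl _ (H.A_sub _ h).2⟩⟩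

lemma iota_self (hH : H.MemTa) (hrefl : H.IsRefl) {v : ℕ} (hv : v ∈ H.V) : H.iota v v = 1 := by
  rw [iota, Finset.card_eq_one]
  refine ⟨v, Finset.eq_singleton_iff_unique_mem.2 ⟨mem_interval.2 ⟨hv, hrefl v hv, hrefl v hv⟩, ?_⟩⟩
  intro z hz
  by_contra hzv
  obtain ⟨-, hvz, hzv'⟩ := mem_interval.1 hz
  exact memTa_iff_irrefl.1 hH v (TransGen.head ⟨hvz, Ne.symm hzv⟩ (TransGen.single ⟨hzv', hzv⟩))

/-- A third vertex of `[v,w]` could be inserted between the consecutive vertices `v, w` of a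
longest path. -/
lemma interval_eq_pair (hH : H.MemTa) (hrefl : H.IsRefl) {l₁ l₂ : List ℕ} {v w : ℕ}
    (hV : ∀ x ∈ l₁ ++ v :: w :: l₂, x ∈ H.V) (hl : (l₁ ++ v :: w :: l₂).IsChain H.StarAdj)
    (hlen : (l₁ ++ v :: w :: l₂).length = H.height + 1) :
    H.interval v w = {v, w} := by
  have hvw : H.StarAdj v w := List.isChain_iff_forall_rel_of_append_cons_cons.1 hl rfl
  ext z
  simp only [mem_interval, Finset.mem_insert, Finset.mem_singleton]
  constructor
  · rintro ⟨hz, hvz, hzw⟩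
    by_contra! hne
    have hchain : (l₁ ++ v :: z :: w :: l₂).IsChain H.StarAdj := by
      rw [List.isChain_split] at hl ⊢
      exact ⟨hl.1, .cons_cons ⟨hvz, hne.1.symm⟩
        (.cons_cons ⟨hzw, hne.2⟩ (List.isChain_cons_cons.1 hl.2).2)⟩
    have := hH.length_le_height
      (by simp only [List.mem_append, List.mem_cons] at hV ⊢; grind) hchain
    simp only [List.length_append, List.length_cons] at this hlen
    omega
  · rintro (rfl | rfl)
    · exact ⟨hvw.mem_V.1, hrefl _ hvw.mem_V.1, hvw.1⟩
    · exact ⟨hvw.mem_V.2, hvw.1, hrefl _ hvw.mem_V.2⟩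

lemma iotaList_eq_replicate (hH : H.MemTa) (hrefl : H.IsRefl) {l : List ℕ}
    (hV : ∀ x ∈ l, x ∈ H.V) (hl : l.IsChain H.StarAdj) (hlen : l.length = H.height + 1) :
    H.iotaList l = List.replicate H.height 2 := by
  refine List.eq_replicate_iff.2 ⟨by simp [iotaList, hlen], ?_⟩
  simp only [iotaList, List.mem_map]
  rintro _ ⟨a, ha, rfl⟩
  obtain ⟨l₁, l₂, rfl⟩ := List.mem_zip_tail_iff.1 ha
  have hne : a.1 ≠ a.2 := (List.isChain_iff_forall_rel_of_append_cons_cons.1 hl rfl).2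
  rw [iota, interval_eq_pair hH hrefl hV hl hlen, Finset.card_pair hne]

def IsWalk (G : Dgraph) (l : List ℕ) : Prop :=
  (∀ v ∈ l, v ∈ G.V) ∧ l.IsChain fun v w => (v, w) ∈ G.A

lemma IsPath.isWalk (hp : G.IsPath p) : G.IsWalk p := hp.2.2

lemma IsWalk.map (hp : G.IsWalk p) (hξ : ξ ∈ Hom G H) : H.IsWalk (p.map ξ) := by
  refine ⟨?_, (List.isChain_map ξ).2 (hp.2.imp fun _ _ h => hξ.2.1 _ h)⟩
  simp only [List.mem_map]
  rintro _ ⟨v, hv, rfl⟩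
  exact hξ.1 v (hp.1 v hv)

lemma isChain_map_starAdj (hξ : ξ ∈ Hom G H) (hp : p.IsChain fun v w => (v, w) ∈ G.A)
    (hne : p.IsChain fun v w => ξ v ≠ ξ w) : (p.map ξ).IsChain H.StarAdj :=
  (List.isChain_map ξ).2 <| List.isChain_iff_forall_rel_of_append_cons_cons.2 fun _ _ _ _ h =>
    ⟨hξ.2.1 _ (List.isChain_iff_forall_rel_of_append_cons_cons.1 hp h),
      List.isChain_iff_forall_rel_of_append_cons_cons.1 hne h⟩

lemma isChain_ne_of_mem_sHom (hξ : ξ ∈ SHom G H) (hp : G.IsPath p) :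
    p.IsChain fun v w => ξ v ≠ ξ w :=
  hp.isChain_starAdj.imp fun _ _ h => hξ.2 _ (Finset.mem_filter.2 h)

lemma mu_pathGraph (H : Dgraph) {q : List ℕ} (hq : q.Nodup) (hne : q ≠ []) (ζ : ℕ → ℕ) :
    mu (pathGraph q hne) H ζ = (H.iotaList (q.map ζ)).sum := by
  have hA : (pathGraph q hne).Astar = (q.zip q.tail).toFinset := by
    refine Finset.filter_true_of_mem fun a ha => ?_
    obtain ⟨l₁, l₂, rfl⟩ := List.mem_zip_tail_iff.1 (List.mem_toFinset.1 ha)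
    exact hq.ne_of_split
  rw [mu, hA, List.sum_toFinset _ (hq.zip_left _), iotaList, ← List.map_tail, List.zip_map,
    List.map_map]
  rfl

/-- Transported onto a longest path `q` of `H`, the walk `w` competes with the `μ`-maximal `σ`,
which scores `2` on every arc of `q`. -/
lemma MemR.sum_iotaList_le (hH : H.MemR) {w : List ℕ} (hw : H.IsWalk w)
    (hlen : w.length = H.height + 1) :
    (H.iotaList w).sum ≤ 2 * H.height := by
  obtain ⟨hTa, hrefl, σ, ⟨-, hσM⟩, hσS⟩ := hH
  obtain ⟨q, hq, hqlen⟩ := exists_isPath_length_eq_height H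
  set L := pathGraph q hq.1
  have hL : L ∈ LSet H := ⟨q, hq.1, hq, hqlen, rfl⟩
  have hLV : ∀ x, x ∈ L.V ↔ x ∈ q := fun x => List.mem_toFinset
  obtain ⟨ζ, hζq, hζ0⟩ := List.exists_map_eq_of_nodup hq.2.1 (hqlen.trans hlen.symm) 0
  have hζ : ζ ∈ Hom L H := by
    refine ⟨fun x hx => hw.1 _ (hζq ▸ List.mem_map_of_mem ((hLV x).1 hx)), fun a ha => ?_,
      fun x hx => hζ0 x (mt (hLV x).2 hx)⟩
    obtain ⟨l₁, l₂, hsplit⟩ := List.mem_zip_tail_iff.1 (List.mem_toFinset.1 ha)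
    refine List.isChain_iff_forall_rel_of_append_cons_cons.1 hw.2
      (l₁ := l₁.map ζ) (l₂ := l₂.map ζ) ?_
    rw [← hζq, hsplit]
    simp
  have hσq : q.map (restrict L.V σ) = q.map σ :=
    List.map_congr_left fun x hx => if_pos ((hLV x).2 hx)
  calc (H.iotaList w).sum = mu L H ζ := by rw [mu_pathGraph H hq.2.1, hζq]
    _ ≤ mu L H (restrict L.V σ) := (hσM L hL).2 ζ hζ
    _ = 2 * H.height := by
      rw [mu_pathGraph H hq.2.1, hσq, iotaList_eq_replicate hTa hrefl (hq.isWalk.map hσS.1).1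
        (isChain_map_starAdj hσS.1 hq.2.2.2 (isChain_ne_of_mem_sHom hσS hq))
        (by simpa using hqlen)]
      simp [mul_comm]

lemma one_le_of_mem_iotaList (hrefl : H.IsRefl) {w : List ℕ} (hw : H.IsWalk w) :
    ∀ x ∈ H.iotaList w, 1 ≤ x := by
  simp only [iotaList, List.mem_map]
  rintro _ ⟨a, ha, rfl⟩
  obtain ⟨l₁, l₂, rfl⟩ := List.mem_zip_tail_iff.1 ha
  exact one_le_iota hrefl (List.isChain_iff_forall_rel_of_append_cons_cons.1 hw.2 rfl)

lemma length_iotaList (H : Dgraph) (w : List ℕ) : (H.iotaList w).length = w.length - 1 := by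
  simp [iotaList]

lemma MemR.prod_iotaList_le (hH : H.MemR) {w : List ℕ} (hw : H.IsWalk w)
    (hlen : w.length = H.height + 1) :
    (H.iotaList w).prod ≤ 2 ^ H.height := by
  have := List.prod_le_two_pow_length (one_le_of_mem_iotaList hH.2.1 hw)
    (by rw [length_iotaList, hlen, Nat.add_sub_cancel]; exact hH.sum_iotaList_le hw hlen)
  rwa [length_iotaList, hlen, Nat.add_sub_cancel] at this

lemma MemR.prod_iotaList_lt (hH : H.MemR) {w l₁ l₂ : List ℕ} {v : ℕ} (hw : H.IsWalk w)
    (hlen : w.length = H.height + 1)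
    (hrep : w = l₁ ++ v :: v :: l₂) : (H.iotaList w).prod < 2 ^ H.height := by
  have hone : 1 ∈ H.iotaList w := by
    rw [← iota_self hH.1 hH.2.1 (hw.1 v (by simp [hrep]))]
    exact List.mem_map_of_mem (f := fun a : ℕ × ℕ => H.iota a.1 a.2)
      ((List.mem_zip_tail_iff (a := (v, v))).2 ⟨l₁, l₂, hrep⟩)
  have := List.prod_lt_two_pow_length (one_le_of_mem_iotaList hH.2.1 hw)
    (by rw [length_iotaList, hlen, Nat.add_sub_cancel]; exact hH.sum_iotaList_le hw hlen) hone
  rwa [length_iotaList, hlen, Nat.add_sub_cancel] at this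

lemma finite_paths (G : Dgraph) (m : ℕ) : {P | G.IsPath P ∧ P.length = m}.Finite := by
  refine ((List.finite_length_eq G.V m).image (List.map Subtype.val)).subset ?_
  rintro P ⟨hP, rfl⟩
  lift P to List G.V using hP.2.2.1
  exact ⟨P, by simp, rfl⟩

noncomputable def maxPaths (G : Dgraph) (n : ℕ) : Finset (List ℕ) :=
  (finite_paths G (n + 1)).toFinset

lemma mem_maxPaths {P : List ℕ} : P ∈ G.maxPaths n ↔ G.IsPath P ∧ P.length = n + 1 :=
  Set.Finite.mem_toFinset _

/-- If `ξ` collapsed an arc `vw`, a longest path through `v` followed by one through `w` would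
give, in `G` or in `H`, a path longer than `n`. -/
lemma mem_sHom_of_forall_maxPaths (hG : MemTaEq n G) (hH : H.MemTa) (hhH : H.height = n)
    (hξ : ξ ∈ Hom G H) (hP : ∀ P ∈ G.maxPaths n, P.IsChain fun v w => ξ v ≠ ξ w) :
    ξ ∈ SHom G H := by
  refine ⟨hξ, fun ⟨v, w⟩ hvw hcol => ?_⟩
  obtain ⟨hA, hne⟩ := Finset.mem_filter.1 hvw
  obtain ⟨P, hPpath, hPlen, hvP⟩ := hG.2.2 v (G.A_sub _ hA).1
  obtain ⟨Q, hQpath, hQlen, hwQ⟩ := hG.2.2 w (G.A_sub _ hA).2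
  have hPξ := isChain_map_starAdj hξ hPpath.2.2.2 (hP P (mem_maxPaths.2 ⟨hPpath, hPlen⟩))
  have hQξ := isChain_map_starAdj hξ hQpath.2.2.2 (hP Q (mem_maxPaths.2 ⟨hQpath, hQlen⟩))
  have hPV := hPpath.2.2.1
  have hQV := hQpath.2.2.1
  have hPG := hPpath.isChain_starAdj
  have hQG := hQpath.isChain_starAdj
  obtain ⟨P₁, P₂, rfl⟩ := List.append_of_mem hvP
  obtain ⟨Q₁, Q₂, rfl⟩ := List.append_of_mem hwQ
  have hG_len : (P₁ ++ v :: w :: Q₂).length ≤ n + 1 := by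
    refine hG.2.1 ▸ hG.1.length_le_height (fun x hx => ?_) ?_
    · simp only [List.mem_append, List.mem_cons] at hx hPV hQV
      rcases hx with hx | rfl | rfl | hx <;> simp_all
    · rw [List.isChain_split] at hPG hQG ⊢
      exact ⟨hPG.1, hQG.2.cons_cons ⟨hA, hne⟩⟩
  have hH_len : (Q₁.map ξ ++ ξ w :: P₂.map ξ).length ≤ n + 1 := by
    refine hhH ▸ hH.length_le_height (fun x hx => ?_) ?_
    · simp only [List.mem_append, List.mem_cons, List.mem_map] at hx hPV hQV
      rcases hx with ⟨y, hy, rfl⟩ | rfl | ⟨y, hy, rfl⟩ <;> exact hξ.1 _ (by simp_all)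
    · simp only [List.map_append, List.map_cons] at hPξ hQξ
      rw [List.isChain_split] at hPξ hQξ ⊢
      exact ⟨hQξ.1, hcol ▸ hPξ.2⟩
  simp only [List.length_append, List.length_cons, List.length_map] at hG_len hH_len hPlen hQlen
  omega

lemma isWalk_map_of_mem_maxPaths (hξ : ξ ∈ Hom G H) (hhH : H.height = n) {P : List ℕ}
    (hP : P ∈ G.maxPaths n) : H.IsWalk (P.map ξ) ∧ (P.map ξ).length = H.height + 1 :=
  ⟨(mem_maxPaths.1 hP).1.isWalk.map hξ, by simp [(mem_maxPaths.1 hP).2, hhH]⟩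

noncomputable def maxWeight (G : Dgraph) (n : ℕ) : ℕ := 2 ^ (n * #(G.maxPaths n))

noncomputable def weight (G H : Dgraph) (n : ℕ) (ξ : ℕ → ℕ) : ℕ :=
  ∏ P ∈ G.maxPaths n, (H.iotaList (P.map ξ)).prod

lemma weight_of_mem_sHom (hH : H.MemTa) (hrefl : H.IsRefl) (hhH : H.height = n)
    (hξ : ξ ∈ SHom G H) : weight G H n ξ = G.maxWeight n := by
  rw [maxWeight, pow_mul, ← Finset.prod_const]
  refine Finset.prod_congr rfl fun P hP => ?_
  obtain ⟨hPpath, hPlen⟩ := mem_maxPaths.1 hP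
  rw [iotaList_eq_replicate hH hrefl (hPpath.isWalk.map hξ.1).1
    (isChain_map_starAdj hξ.1 hPpath.2.2.2 (isChain_ne_of_mem_sHom hξ hPpath))
    (by simp [hPlen, hhH]), List.prod_replicate, hhH]

lemma weight_lt_of_not_mem_sHom (hG : MemTaEq n G) (hH : H.MemR) (hhH : H.height = n)
    (hξ : ξ ∈ Hom G H) (hns : ξ ∉ SHom G H) : weight G H n ξ < G.maxWeight n := by
  have hwalk := fun P (hP : P ∈ G.maxPaths n) => isWalk_map_of_mem_maxPaths hξ hhH hP
  obtain ⟨P, hP, hcol⟩ : ∃ P ∈ G.maxPaths n, ¬ P.IsChain fun v w => ξ v ≠ ξ w := by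
    by_contra! h
    exact hns (mem_sHom_of_forall_maxPaths hG hH.1 hhH hξ h)
  obtain ⟨v, w, l₁, l₂, hsplit, hvw⟩ : ∃ v w l₁ l₂, P = l₁ ++ v :: w :: l₂ ∧ ξ v = ξ w := by
    simpa [List.isChain_iff_forall_rel_of_append_cons_cons] using hcol
  rw [maxWeight, pow_mul, ← Finset.prod_const]
  refine Finset.prod_lt_prod (fun Q hQ => List.prod_pos fun x hx =>
      one_le_of_mem_iotaList hH.2.1 (hwalk Q hQ).1 x hx)
    (fun Q hQ => hhH ▸ hH.prod_iotaList_le (hwalk Q hQ).1 (hwalk Q hQ).2)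
    ⟨P, hP, hhH ▸ hH.prod_iotaList_lt (hwalk P hP).1 (hwalk P hP).2
      (l₁ := l₁.map ξ) (l₂ := l₂.map ξ) (v := ξ v) (by simp [hsplit, hvw])⟩

lemma finite_hom (G H : Dgraph) : (Hom G H).Finite := by
  refine Set.Finite.of_finite_image (f := fun f (v : G.V) => f v) ?_ fun f hf g hg h => ?_
  · refine (Set.Finite.pi fun _ => H.V.finite_toSet).subset ?_
    rintro _ ⟨f, hf, rfl⟩ v -
    exact hf.1 v v.2
  · funext x
    by_cases hx : x ∈ G.V
    · exact congrFun h ⟨x, hx⟩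
    · rw [hf.2.2 x hx, hg.2.2 x hx]

noncomputable def homs (G H : Dgraph) : Finset (ℕ → ℕ) := (finite_hom G H).toFinset

lemma mem_homs {G H : Dgraph} {f : ℕ → ℕ} : f ∈ homs G H ↔ f ∈ Hom G H :=
  Set.Finite.mem_toFinset _

lemma ncard_hom (G H : Dgraph) : (Hom G H).ncard = #(homs G H) :=
  Set.ncard_eq_toFinset_card _ _

open scoped Classical in
lemma ncard_sHom (G H : Dgraph) : (SHom G H).ncard = #{f ∈ homs G H | f ∈ SHom G H} := by
  rw [← Set.ncard_coe_finset]
  congr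
  ext f
  simpa [mem_homs] using fun hf => hf.1

open scoped Classical in
noncomputable def extensions (E : Finset ℕ) (opts : ℕ → Finset ℕ) (g : ℕ → ℕ) : Finset (ℕ → ℕ) :=
  (E.pi opts).image fun p x => if h : x ∈ E then p x h else g x

lemma mem_extensions {E : Finset ℕ} {opts : ℕ → Finset ℕ} {g f : ℕ → ℕ} :
    f ∈ extensions E opts g ↔ (∀ e ∈ E, f e ∈ opts e) ∧ ∀ x ∉ E, f x = g x := by
  simp only [extensions, Finset.mem_image, Finset.mem_pi]
  constructor
  · rintro ⟨p, hp, rfl⟩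
    exact ⟨fun e he => by simpa [he] using hp e he, fun x hx => by simp [hx]⟩
  · rintro ⟨h1, h2⟩
    refine ⟨fun x _ => f x, h1, funext fun x => ?_⟩
    by_cases hx : x ∈ E
    · simp [hx]
    · simp [hx, h2 x hx]

lemma card_extensions (E : Finset ℕ) (opts : ℕ → Finset ℕ) (g : ℕ → ℕ) :
    #(extensions E opts g) = ∏ e ∈ E, #(opts e) := by
  classical
  rw [extensions, Finset.card_image_of_injOn, Finset.card_pi]
  intro p _ q _ h
  funext x hx
  simpa [hx] using congrFun h x

abbrev MidIndex := (Σ _ : List ℕ, ℕ × ℕ) × ℕ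

/-- `⟨⟨P, a⟩, j⟩` indexes the `j`-th new vertex subdividing the arc `a` of the longest path `P`;
an arc on `c` longest paths thus receives `k * c` new vertices. -/
noncomputable def midIndex (G : Dgraph) (n k : ℕ) : Finset MidIndex :=
  ((G.maxPaths n).sigma fun P => (P.zip P.tail).toFinset) ×ˢ Finset.range k

def midVertex (G : Dgraph) (t : MidIndex) : ℕ := G.V.sup id + 1 + Encodable.encode t

noncomputable def midVertices (G : Dgraph) (n k : ℕ) : Finset ℕ :=
  (midIndex G n k).image (midVertex G)

noncomputable def arcOf (G : Dgraph) (x : ℕ) : ℕ × ℕ := (Function.invFun (midVertex G) x).1.2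

lemma midVertex_injective (G : Dgraph) : Function.Injective (midVertex G) := fun _ _ h =>
  Encodable.encode_injective (Nat.add_left_cancel h)

lemma midVertex_notMem (G : Dgraph) (t : MidIndex) : midVertex G t ∉ G.V := fun h => by
  have := Finset.le_sup (f := id) h
  simp only [midVertex, id] at this
  omega

lemma notMem_midVertices {x : ℕ} (hx : x ∈ G.V) : x ∉ midVertices G n k := by
  simp only [midVertices, Finset.mem_image, not_exists, not_and]
  exact fun t _ h => midVertex_notMem G t (h ▸ hx)

lemma arcOf_midVertex (t : MidIndex) : arcOf G (midVertex G t) = t.1.2 := by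
  rw [arcOf, Function.leftInverse_invFun (midVertex_injective G)]

lemma starAdj_of_mem_midIndex {t : MidIndex} (ht : t ∈ midIndex G n k) :
    G.StarAdj t.1.2.1 t.1.2.2 := by
  simp only [midIndex, Finset.mem_product, Finset.mem_sigma, List.mem_toFinset] at ht
  obtain ⟨l₁, l₂, hsplit⟩ := List.mem_zip_tail_iff.1 ht.1.2
  exact List.isChain_iff_forall_rel_of_append_cons_cons.1
    (mem_maxPaths.1 ht.1.1).1.isChain_starAdj hsplit

lemma prod_iota_midIndex (H : Dgraph) (ξ : ℕ → ℕ) :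
    ∏ t ∈ midIndex G n k, H.iota (ξ t.1.2.1) (ξ t.1.2.2) = weight G H n ξ ^ k := by
  rw [midIndex, Finset.prod_product]
  simp only [Finset.prod_const, Finset.card_range]
  rw [Finset.prod_pow, Finset.prod_sigma, weight]
  refine congrArg (· ^ k) (Finset.prod_congr rfl fun P hP => ?_)
  rw [List.prod_toFinset _ ((mem_maxPaths.1 hP).1.2.1.zip_left _), iotaList, ← List.map_tail,
    List.zip_map, List.map_map]
  rfl

lemma card_extensions_midVertices (H : Dgraph) (ξ : ℕ → ℕ) :
    #(extensions (midVertices G n k)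
      (fun x => H.interval (ξ (arcOf G x).1) (ξ (arcOf G x).2)) ξ) = weight G H n ξ ^ k := by
  rw [card_extensions, midVertices, Finset.prod_image fun _ _ _ _ h => midVertex_injective G h,
    ← prod_iota_midIndex]
  simp only [arcOf_midVertex, iota]

structure IsSubdivision (Γ G : Dgraph) (n k : ℕ) : Prop where
  V_eq : Γ.V = G.V ∪ midVertices G n k
  A_subset : G.A ⊆ Γ.A
  mem_A_midVertex : ∀ t ∈ midIndex G n k,
    (t.1.2.1, midVertex G t) ∈ Γ.A ∧ (midVertex G t, t.1.2.2) ∈ Γ.A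

def MidpointsExtend (Γ G H : Dgraph) (n k : ℕ) (ξ : ℕ → ℕ) : Prop :=
  ∀ f : ℕ → ℕ, (∀ x ∉ midVertices G n k, f x = ξ x) →
    (∀ t ∈ midIndex G n k, f (midVertex G t) ∈ H.interval (ξ t.1.2.1) (ξ t.1.2.2)) →
    f ∈ Hom Γ H

namespace IsSubdivision

lemma restrict_mem_hom (hΓ : IsSubdivision Γ G n k) {f : ℕ → ℕ} (hf : f ∈ Hom Γ H) :
    restrict G.V f ∈ Hom G H := by
  refine ⟨fun v hv => ?_, fun a ha => ?_, fun v hv => if_neg hv⟩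
  · rw [restrict, if_pos hv]
    exact hf.1 v (hΓ.V_eq ▸ Finset.mem_union_left _ hv)
  · have := G.A_sub a ha
    simp only [restrict, if_pos this.1, if_pos this.2]
    exact hf.2.1 a (hΓ.A_subset ha)

open scoped Classical in
lemma ncard_hom_eq_sum (hΓ : IsSubdivision Γ G n k) : (Hom Γ H).ncard =
    ∑ ξ ∈ homs G H, #{f ∈ homs Γ H | restrict G.V f = ξ} := by
  rw [ncard_hom]
  exact Finset.card_eq_sum_card_fiberwise fun f hf =>
    mem_homs.2 (hΓ.restrict_mem_hom (mem_homs.1 hf))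

open scoped Classical in
lemma fiber_subset (hΓ : IsSubdivision Γ G n k) (hξ : ξ ∈ Hom G H) :
    {f ∈ homs Γ H | restrict G.V f = ξ} ⊆ extensions (midVertices G n k)
      (fun x => H.interval (ξ (arcOf G x).1) (ξ (arcOf G x).2)) ξ := by
  intro f hf
  obtain ⟨hfΓ, rfl⟩ := Finset.mem_filter.1 hf
  have hf := mem_homs.1 hfΓ
  have hfG : ∀ v ∈ G.V, restrict G.V f v = f v := fun v hv => if_pos hv
  refine mem_extensions.2 ⟨?_, fun x hx => ?_⟩
  · simp only [midVertices, Finset.mem_image]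
    rintro _ ⟨t, ht, rfl⟩
    have hab := (starAdj_of_mem_midIndex ht).mem_V
    rw [arcOf_midVertex, hfG _ hab.1, hfG _ hab.2]
    refine mem_interval.2 ⟨hf.1 _ ?_, hf.2.1 _ (hΓ.mem_A_midVertex t ht).1,
      hf.2.1 _ (hΓ.mem_A_midVertex t ht).2⟩
    exact hΓ.V_eq ▸ Finset.mem_union_right _ (Finset.mem_image_of_mem _ ht)
  · by_cases hxG : x ∈ G.V
    · exact (hfG x hxG).symm
    · rw [restrict, if_neg hxG, hf.2.2 x (by simp [hΓ.V_eq, hxG, hx])]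

open scoped Classical in
lemma card_fiber_le (hΓ : IsSubdivision Γ G n k) (hξ : ξ ∈ Hom G H) :
    #{f ∈ homs Γ H | restrict G.V f = ξ} ≤ weight G H n ξ ^ k :=
  (Finset.card_le_card (hΓ.fiber_subset hξ)).trans_eq (card_extensions_midVertices H ξ)

open scoped Classical in
lemma card_fiber_eq (hΓ : IsSubdivision Γ G n k) (hξ : ξ ∈ Hom G H)
    (hext : MidpointsExtend Γ G H n k ξ) :
    #{f ∈ homs Γ H | restrict G.V f = ξ} = weight G H n ξ ^ k := by
  refine le_antisymm (hΓ.card_fiber_le hξ) ((card_extensions_midVertices H ξ).symm.trans_le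
    (Finset.card_le_card fun f hf => ?_))
  obtain ⟨hmid, hout⟩ := mem_extensions.1 hf
  refine Finset.mem_filter.2 ⟨mem_homs.2 (hext f hout fun t ht => ?_), funext fun x => ?_⟩
  · simpa [arcOf_midVertex] using hmid _ (Finset.mem_image_of_mem _ ht)
  · by_cases hx : x ∈ G.V
    · rw [restrict, if_pos hx, hout x (notMem_midVertices hx)]
    · rw [restrict, if_neg hx, hξ.2.2 x hx]

end IsSubdivision

open scoped Classical in
lemma ncard_sHom_mul_le (hH : H.MemTa) (hrefl : H.IsRefl) (hhH : H.height = n)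
    (hΓ : IsSubdivision Γ G n k) (hext : ∀ ξ ∈ SHom G H, MidpointsExtend Γ G H n k ξ) :
    (SHom G H).ncard * G.maxWeight n ^ k ≤ (Hom Γ H).ncard := by
  rw [ncard_sHom, hΓ.ncard_hom_eq_sum, ← smul_eq_mul, ← Finset.sum_const]
  refine le_of_eq_of_le (Finset.sum_congr rfl fun ξ hξ => ?_)
    (Finset.sum_le_sum_of_subset (Finset.filter_subset _ _))
  obtain ⟨-, hξ⟩ := Finset.mem_filter.1 hξ
  rw [hΓ.card_fiber_eq hξ.1 (hext ξ hξ), weight_of_mem_sHom hH hrefl hhH hξ]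

open scoped Classical in
lemma ncard_hom_le (hG : MemTaEq n G) (hH : H.MemR) (hhH : H.height = n)
    (hΓ : IsSubdivision Γ G n k) :
    (Hom Γ H).ncard ≤
      (SHom G H).ncard * G.maxWeight n ^ k + (Hom G H).ncard * (G.maxWeight n - 1) ^ k := by
  rw [hΓ.ncard_hom_eq_sum, ncard_sHom, ncard_hom,
    ← Finset.sum_filter_add_sum_filter_not _ (· ∈ SHom G H)]
  refine add_le_add ?_ ?_
  · rw [← smul_eq_mul, ← Finset.sum_const]
    refine Finset.sum_le_sum fun ξ hξ => ?_
    obtain ⟨-, hξ⟩ := Finset.mem_filter.1 hξ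
    rw [← weight_of_mem_sHom hH.1 hH.2.1 hhH hξ]
    exact hΓ.card_fiber_le hξ.1
  · refine (Finset.sum_le_card_nsmul _ _ _ fun ξ hξ => ?_).trans
      (Nat.mul_le_mul_right _ (Finset.card_filter_le _ _))
    obtain ⟨hξ, hns⟩ := Finset.mem_filter.1 hξ
    have hξ := mem_homs.1 hξ
    exact (hΓ.card_fiber_le hξ).trans (Nat.pow_le_pow_left
      (Nat.le_sub_one_of_lt (weight_lt_of_not_mem_sHom hG hH hhH hξ hns)) k)

lemma ncard_sHom_le_of_subdivisions {R S : Dgraph} (hR : R.MemR) (hS : S.MemR)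
    (hhR : R.height = n) (hhS : S.height = n) (hG : MemTaEq n G)
    (hsub : ∀ k, ∃ Γ, IsSubdivision Γ G n k ∧ (∀ ξ ∈ SHom G R, MidpointsExtend Γ G R n k ξ) ∧
      (Hom Γ R).ncard ≤ (Hom Γ S).ncard) :
    (SHom G R).ncard ≤ (SHom G S).ncard := by
  refine Nat.le_of_forall_mul_pow_le (W := G.maxWeight n) (C := (Hom G S).ncard)
    Nat.one_le_two_pow fun k => ?_
  obtain ⟨Γ, hΓ, hext, hle⟩ := hsub k
  calc (SHom G R).ncard * G.maxWeight n ^ k ≤ (Hom Γ R).ncard :=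
        ncard_sHom_mul_le hR.1 hR.2.1 hhR hΓ hext
    _ ≤ (Hom Γ S).ncard := hle
    _ ≤ _ := ncard_hom_le hG hS hhS hΓ

noncomputable def subdivision (G : Dgraph) (n k : ℕ) : Dgraph where
  V := G.V ∪ midVertices G n k
  nonempty := G.nonempty.mono Finset.subset_union_left
  A := G.A ∪ (midIndex G n k).image (fun t => (t.1.2.1, midVertex G t)) ∪
    (midIndex G n k).image (fun t => (midVertex G t, t.1.2.2))
  A_sub := by
    intro p hp
    simp only [Finset.mem_union, Finset.mem_image] at hp ⊢
    rcases hp with (hp | ⟨t, ht, rfl⟩) | ⟨t, ht, rfl⟩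
    · exact ⟨.inl (G.A_sub p hp).1, .inl (G.A_sub p hp).2⟩
    · exact ⟨.inl (starAdj_of_mem_midIndex ht).mem_V.1, .inr (Finset.mem_image_of_mem _ ht)⟩
    · exact ⟨.inr (Finset.mem_image_of_mem _ ht), .inl (starAdj_of_mem_midIndex ht).mem_V.2⟩

lemma mem_subdivision_A {x y : ℕ} : (x, y) ∈ (subdivision G n k).A ↔ (x, y) ∈ G.A ∨
    (∃ t ∈ midIndex G n k, x = t.1.2.1 ∧ y = midVertex G t) ∨
    ∃ t ∈ midIndex G n k, x = midVertex G t ∧ y = t.1.2.2 := by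
  simp only [subdivision, Finset.mem_union, Finset.mem_image, Prod.mk.injEq, or_assoc]
  simp only [eq_comm]

lemma isSubdivision_subdivision : IsSubdivision (subdivision G n k) G n k where
  V_eq := rfl
  A_subset _ h := mem_subdivision_A.2 (Or.inl h)
  mem_A_midVertex t ht :=
    ⟨mem_subdivision_A.2 (Or.inr (Or.inl ⟨t, ht, rfl, rfl⟩)),
      mem_subdivision_A.2 (Or.inr (Or.inr ⟨t, ht, rfl, rfl⟩))⟩

lemma midpointsExtend_subdivision (hξ : ξ ∈ Hom G H) :
    MidpointsExtend (subdivision G n k) G H n k ξ := by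
  intro f hout hmid
  have hG : ∀ v ∈ G.V, f v = ξ v := fun v hv => hout v (notMem_midVertices hv)
  refine ⟨fun v hv => ?_, fun ⟨x, y⟩ hxy => ?_, fun v hv => ?_⟩
  · rcases Finset.mem_union.1 hv with hv | hv
    · exact hG v hv ▸ hξ.1 v hv
    · obtain ⟨t, ht, rfl⟩ := Finset.mem_image.1 hv
      exact (mem_interval.1 (hmid t ht)).1
  · rcases mem_subdivision_A.1 hxy with h | ⟨t, ht, rfl, rfl⟩ | ⟨t, ht, rfl, rfl⟩
    · rw [hG x (G.A_sub _ h).1, hG y (G.A_sub _ h).2]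
      exact hξ.2.1 _ h
    · rw [hG _ (starAdj_of_mem_midIndex ht).mem_V.1]
      exact (mem_interval.1 (hmid t ht)).2.1
    · rw [hG _ (starAdj_of_mem_midIndex ht).mem_V.2]
      exact (mem_interval.1 (hmid t ht)).2.2
  · simp only [subdivision, Finset.mem_union, not_or] at hv
    rw [hout v hv.2, hξ.2.2 v hv.1]

lemma MemTa.subdivision (hG : G.MemTa) : (subdivision G n k).MemTa := by
  refine memTa_of_strictMono
    (fun x => if x ∈ G.V then 2 * G.rank x else 2 * G.rank (arcOf G x).1 + 1) fun x y hxy => ?_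
  rcases mem_subdivision_A.1 hxy.1 with h | ⟨t, ht, rfl, rfl⟩ | ⟨t, ht, rfl, rfl⟩
  · have := hG.rank_lt ⟨h, hxy.2⟩
    simp only [(G.A_sub _ h).1, (G.A_sub _ h).2, if_true]
    omega
  · simp [(starAdj_of_mem_midIndex ht).mem_V.1, midVertex_notMem, arcOf_midVertex]
  · have := hG.rank_lt (starAdj_of_mem_midIndex ht)
    simp only [midVertex_notMem, (starAdj_of_mem_midIndex ht).mem_V.2, if_true, if_false,
      arcOf_midVertex]
    omega

open scoped Classical in
noncomputable def reflTransClosure (Γ : Dgraph) : Dgraph where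
  V := Γ.V
  nonempty := Γ.nonempty
  A := (Γ.V ×ˢ Γ.V).filter fun p => ReflTransGen (fun x y => (x, y) ∈ Γ.A) p.1 p.2
  A_sub _ hp := Finset.mem_product.1 (Finset.mem_filter.1 hp).1

lemma mem_reflTransClosure_A {x y : ℕ} : (x, y) ∈ (reflTransClosure Γ).A ↔
    x ∈ Γ.V ∧ y ∈ Γ.V ∧ ReflTransGen (fun x y => (x, y) ∈ Γ.A) x y := by
  simp [reflTransClosure, and_assoc]

lemma reflTransGen_starAdj {x y : ℕ} (h : ReflTransGen (fun x y => (x, y) ∈ Γ.A) x y) :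
    ReflTransGen Γ.StarAdj x y := by
  induction h with
  | refl => exact .refl
  | tail _ hbc ih =>
    rename_i b c _
    by_cases hbc' : b = c
    · exact hbc' ▸ ih
    · exact ih.tail ⟨hbc, hbc'⟩

lemma MemTa.isPoset_reflTransClosure (hΓ : Γ.MemTa) : (reflTransClosure Γ).IsPoset := by
  refine ⟨fun v hv => mem_reflTransClosure_A.2 ⟨hv, hv, .refl⟩, fun v w hvw hwv => ?_,
    fun u v w huv hvw => ?_⟩
  · obtain ⟨-, -, hvw⟩ := mem_reflTransClosure_A.1 hvw
    obtain ⟨-, -, hwv⟩ := mem_reflTransClosure_A.1 hwv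
    rcases reflTransGen_iff_eq_or_transGen.1 (reflTransGen_starAdj hvw) with h | h
    · exact h.symm
    · exact absurd (h.trans_left (reflTransGen_starAdj hwv)) (memTa_iff_irrefl.1 hΓ v)
  · obtain ⟨hu, -, huv⟩ := mem_reflTransClosure_A.1 huv
    obtain ⟨-, hw, hvw⟩ := mem_reflTransClosure_A.1 hvw
    exact mem_reflTransClosure_A.2 ⟨hu, hw, huv.trans hvw⟩

lemma IsSubdivision.reflTransClosure (hΓ : IsSubdivision Γ G n k) :
    IsSubdivision (reflTransClosure Γ) G n k where
  V_eq := hΓ.V_eq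
  A_subset _ h := mem_reflTransClosure_A.2
    ⟨(Γ.A_sub _ (hΓ.A_subset h)).1, (Γ.A_sub _ (hΓ.A_subset h)).2, .single (hΓ.A_subset h)⟩
  mem_A_midVertex t ht := by
    have h := hΓ.mem_A_midVertex t ht
    exact ⟨mem_reflTransClosure_A.2 ⟨(Γ.A_sub _ h.1).1, (Γ.A_sub _ h.1).2, .single h.1⟩,
      mem_reflTransClosure_A.2 ⟨(Γ.A_sub _ h.2).1, (Γ.A_sub _ h.2).2, .single h.2⟩⟩

lemma mem_A_of_mem_reflTransClosure_A {P : Dgraph} (hrefl : P.IsRefl)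
    (htrans : ∀ u v w, (u, v) ∈ P.A → (v, w) ∈ P.A → (u, w) ∈ P.A) {g : ℕ → ℕ}
    (hgV : ∀ v ∈ Γ.V, g v ∈ P.V) (hgA : ∀ a ∈ Γ.A, (g a.1, g a.2) ∈ P.A) {x y : ℕ}
    (hxy : (x, y) ∈ (reflTransClosure Γ).A) : (g x, g y) ∈ P.A := by
  rw [mem_reflTransClosure_A] at hxy
  obtain ⟨hx, -, hxy⟩ := hxy
  induction hxy with
  | refl => exact hrefl _ (hgV x hx)
  | tail _ hbc ih => exact htrans _ _ _ ih (hgA _ hbc)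

lemma interval_eq_pair_of_mem_midIndex (hH : H.MemTa) (hrefl : H.IsRefl) (hhH : H.height = n)
    (hξ : ξ ∈ SHom G H) {t : MidIndex} (ht : t ∈ midIndex G n k) :
    H.interval (ξ t.1.2.1) (ξ t.1.2.2) = {ξ t.1.2.1, ξ t.1.2.2} := by
  simp only [midIndex, Finset.mem_product, Finset.mem_sigma, List.mem_toFinset] at ht
  obtain ⟨hPpath, hPlen⟩ := mem_maxPaths.1 ht.1.1
  obtain ⟨l₁, l₂, hsplit⟩ := List.mem_zip_tail_iff.1 ht.1.2
  have hchain := isChain_map_starAdj hξ.1 hPpath.2.2.2 (isChain_ne_of_mem_sHom hξ hPpath)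
  have hV := (hPpath.isWalk.map hξ.1).1
  rw [hsplit, List.map_append, List.map_cons, List.map_cons] at hchain hV
  refine interval_eq_pair hH hrefl hV hchain ?_
  rw [← List.map_cons, ← List.map_cons, ← List.map_append, ← hsplit, List.length_map, hPlen, hhH]

lemma exists_retraction (hrefl : G.IsRefl) {f : ℕ → ℕ} (hfG : ∀ v ∈ G.V, f v = ξ v)
    (hmid : ∀ t ∈ midIndex G n k,
      f (midVertex G t) = ξ t.1.2.1 ∨ f (midVertex G t) = ξ t.1.2.2) :
    ∃ g : ℕ → ℕ, (∀ v ∈ (subdivision G n k).V, g v ∈ G.V ∧ f v = ξ (g v)) ∧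
      ∀ a ∈ (subdivision G n k).A, (g a.1, g a.2) ∈ G.A := by
  set g : ℕ → ℕ := fun x =>
    if x ∈ G.V then x else if f x = ξ (arcOf G x).1 then (arcOf G x).1 else (arcOf G x).2
  have hg_mid : ∀ t ∈ midIndex G n k, (g (midVertex G t) = t.1.2.1 ∨
      g (midVertex G t) = t.1.2.2) ∧ f (midVertex G t) = ξ (g (midVertex G t)) := by
    intro t ht
    simp only [g, midVertex_notMem, arcOf_midVertex, if_false]
    split_ifs with h
    · exact ⟨.inl rfl, h⟩
    · exact ⟨.inr rfl, (hmid t ht).resolve_left h⟩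
  refine ⟨g, fun v hv => ?_, fun ⟨x, y⟩ hxy => ?_⟩
  · rcases Finset.mem_union.1 hv with hv | hv
    · simp [g, hv, hfG v hv]
    · obtain ⟨t, ht, rfl⟩ := Finset.mem_image.1 hv
      have := (starAdj_of_mem_midIndex ht).mem_V
      exact ⟨by rcases (hg_mid t ht).1 with h | h <;> simp [h, this], (hg_mid t ht).2⟩
  · rcases mem_subdivision_A.1 hxy with h | ⟨t, ht, rfl, rfl⟩ | ⟨t, ht, rfl, rfl⟩
    · simpa [g, (G.A_sub _ h).1, (G.A_sub _ h).2] using h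
    · have hA := starAdj_of_mem_midIndex ht
      rcases (hg_mid t ht).1 with h | h <;> simp only [h, g, hA.mem_V.1, if_true]
      exacts [hrefl _ hA.mem_V.1, hA.1]
    · have hA := starAdj_of_mem_midIndex ht
      rcases (hg_mid t ht).1 with h | h <;> simp only [h, g, hA.mem_V.2, if_true]
      exacts [hA.1, hrefl _ hA.mem_V.2]

lemma midpointsExtend_reflTransClosure (hGpos : G.IsPoset) (hH : H.MemTa) (hrefl : H.IsRefl)
    (hhH : H.height = n) (hξ : ξ ∈ SHom G H) :
    MidpointsExtend (reflTransClosure (subdivision G n k)) G H n k ξ := by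
  intro f hout hmid
  obtain ⟨g, hgV, hgA⟩ := exists_retraction hGpos.1 (fun v hv => hout v (notMem_midVertices hv))
    fun t ht => by
      have := hmid t ht
      rwa [interval_eq_pair_of_mem_midIndex hH hrefl hhH hξ ht, Finset.mem_insert,
        Finset.mem_singleton] at this
  refine ⟨fun v hv => (hgV v hv).2 ▸ hξ.1.1 _ (hgV v hv).1, fun ⟨x, y⟩ hxy => ?_,
    fun v hv => ?_⟩
  · obtain ⟨hx, hy, -⟩ := mem_reflTransClosure_A.1 hxy
    rw [(hgV x hx).2, (hgV y hy).2]
    exact hξ.1.2.1 _ (mem_A_of_mem_reflTransClosure_A hGpos.1 hGpos.2.2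
      (fun v hv => (hgV v hv).1) hgA hxy)
  · simp only [reflTransClosure, subdivision, Finset.mem_union, not_or] at hv
    rw [hout v hv.2, hξ.1.2.2 v hv.1]

end Dgraph

theorem stmt_1_general (n : ℕ) (R S : Dgraph) (hR : MemR R) (hS : MemR S)
    (hhR : R.height = n) (hhS : S.height = n) :
    ((∀ G : Dgraph, G.MemTa → (Hom G R).ncard ≤ (Hom G S).ncard) →
      ∀ G : Dgraph, MemTaEq n G → (SHom G S).Nonempty →
        (SHom G R).ncard ≤ (SHom G S).ncard) ∧
    ((∀ G : Dgraph, G.IsPoset → (Hom G R).ncard ≤ (Hom G S).ncard) →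
      ∀ G : Dgraph, MemTaEq n G → G.IsPoset →
        (SHom G R).ncard ≤ (SHom G S).ncard) := by
  refine ⟨fun hyp G hG _ => ?_, fun hyp G hG hGpos => ?_⟩
  · exact ncard_sHom_le_of_subdivisions hR hS hhR hhS hG fun k =>
      ⟨subdivision G n k, isSubdivision_subdivision, fun _ hξ => midpointsExtend_subdivision hξ.1,
        hyp _ hG.1.subdivision⟩
  · exact ncard_sHom_le_of_subdivisions hR hS hhR hhS hG fun k =>
      ⟨reflTransClosure (subdivision G n k), isSubdivision_subdivision.reflTransClosure,
        fun _ hξ => midpointsExtend_reflTransClosure hGpos hR.1 hR.2.1 hhR hξ,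
        hyp _ hG.1.subdivision.isPoset_reflTransClosure⟩

theorem stmt_1 (n : ℕ) (hn : 1 ≤ n) (R S : Dgraph) (hR : MemR R) (hS : MemR S)
    (hhR : R.height = n) (hhS : S.height = n) :
    ((∀ G : Dgraph, G.MemTa → (Hom G R).ncard ≤ (Hom G S).ncard) →
      ∀ G : Dgraph, MemTaEq n G → (SHom G S).Nonempty →
        (SHom G R).ncard ≤ (SHom G S).ncard) ∧
    ((∀ G : Dgraph, G.IsPoset → (Hom G R).ncard ≤ (Hom G S).ncard) →
      ∀ G : Dgraph, MemTaEq n G → G.IsPoset →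
        (SHom G R).ncard ≤ (SHom G S).ncard) :=
  stmt_1_general n R S hR hS hhR hhS
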